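/- arXiv:2301.01897 — 4 statements merged into one kernel-verified Lean document; each statement's English description precedes it below -/
import Mathlib

section
/- Let M be a virtually d-periodic object in an abelian category A with enough projectives. Then Hom_{D_sg(A)}(M, Σ^{nd}(M)) ≠ 0 for every integer n (positive, zero, and negative). -/
/-!
In `D_sg(A)` projectives vanish and short exact sequences give triangles, so `Ω ≅ Σ⁻¹`, and for
a fixed object `W` the objects `N` with `Hom(W, N) = 0` (resp. `Hom(N, W) = 0`) contain the
projectives and are closed under summands and extensions. As `Σ^{-d} M ≅ Ω^d M ∈ ⟨M⟩`, the
vanishing of `Hom(M, Σ^j M)` therefore depends only on `j` modulo `d`. Vanishing for `j = n d`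
would give `Hom(M, M) = 0`, i.e. `M ≅ 0` in `D_sg(A)`, so `M` would have finite projective
dimension.
-/

open CategoryTheory Limits Pretriangulated

noncomputable section

namespace SingPaper

variable {A : Type*} [Category A] [Abelian A] [EnoughProjectives A]

/-- A chosen first syzygy `Ω(M)`: the kernel of the chosen epimorphism
`Projective.π M : Projective.over M ⟶ M` from a projective object. -/
def syz (M : A) : A := kernel (Projective.π M)

/-- Iterated syzygies `Ω^d(M)`. -/
def syzPow (d : ℕ) (M : A) : A := match d with
  | 0 => M
  | n + 1 => syz (syzPow n M)

/-- `extClosure M` is the class of objects of `⟨M⟩`, the smallest full subcategory of `A`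
containing `M` and all projective objects which is closed under direct summands and
extensions. -/
inductive extClosure (M : A) : A → Prop
  | self : extClosure M M
  | proj (P : A) : Projective P → extClosure M P
  | summand (X Y : A) (s : X ⟶ Y) (r : Y ⟶ X) :
      s ≫ r = 𝟙 X → extClosure M Y → extClosure M X
  | ext (X Y Z : A) (f : X ⟶ Y) (g : Y ⟶ Z) (w : f ≫ g = 0) :
      (ShortComplex.mk f g w).ShortExact →
      extClosure M X → extClosure M Z → extClosure M Y

/-- `M` has finite projective dimension iff some iterated syzygy is projective. -/
def HasFiniteProjDim (M : A) : Prop := ∃ n : ℕ, Projective (syzPow n M)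

/-- `M` is virtually `d`-periodic: it has infinite projective dimension and
`Ω^d(M)` belongs to `⟨M⟩`. -/
def VirtuallyPeriodic (d : ℕ) (M : A) : Prop :=
  ¬ HasFiniteProjDim M ∧ extClosure M (syzPow d M)

variable {T : Type*} [Category T] [Preadditive T] [HasZeroObject T] [HasShift T ℤ]
  [∀ n : ℤ, (shiftFunctor T n).Additive] [Pretriangulated T]

/-- `ι : A ⥤ T` exhibits the triangulated category `T` as the singularity category
`D_sg(A) = D^b(A)/K^b(P)` of `A`; we record the characteristic properties of the
composite functor `A ⥤ D^b(A) ⥤ D_sg(A)` sending an object to the corresponding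
stalk complex in degree `0`. -/
structure IsSingularityCategory (ι : A ⥤ T) : Prop where
  /-- projective objects of `A` become zero objects in `D_sg(A)` -/
  proj_isZero : ∀ P : A, Projective P → IsZero (ι.obj P)
  /-- any short exact sequence in `A` induces a distinguished triangle in `D_sg(A)` -/
  ses_triangle : ∀ {X Y Z : A} (f : X ⟶ Y) (g : Y ⟶ Z) (w : f ≫ g = 0),
      (ShortComplex.mk f g w).ShortExact →
      ∃ h : ι.obj Z ⟶ (ι.obj X)⟦(1 : ℤ)⟧,
        Triangle.mk (ι.map f) (ι.map g) h ∈ distTriang T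
  /-- an object of `A` becomes zero in `D_sg(A)` iff it has finite projective dimension -/
  isZero_iff : ∀ M : A, IsZero (ι.obj M) ↔ HasFiniteProjDim M
  /-- every object of `D_sg(A)` is isomorphic to a shift of a stalk complex -/
  obj_surj : ∀ X : T, ∃ (M : A) (n : ℤ), Nonempty (X ≅ (ι.obj M)⟦n⟧)

section Shift

variable {C : Type*} [Category C] {G : Type*} [AddCommGroup G] [HasShift C G]

lemma subsingleton_shift_hom_iff (X Y : C) {a b c : G} (h : c + a = b) :
    Subsingleton (X⟦a⟧ ⟶ Y⟦b⟧) ↔ Subsingleton (X ⟶ Y⟦c⟧) :=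
  ((shiftEquiv C a).fullyFaithfulFunctor.homEquiv.trans
    (Iso.homCongr (Iso.refl _) ((shiftFunctorAdd' C c a b h).app Y).symm)).subsingleton_congr.symm

lemma subsingleton_hom_shift_zero_iff (X Y : C) :
    Subsingleton (X ⟶ Y⟦(0 : G)⟧) ↔ Subsingleton (X ⟶ Y) :=
  (Iso.homCongr (Iso.refl X) ((shiftFunctorZero C G).app Y)).subsingleton_congr

end Shift

namespace IsSingularityCategory

variable {ι : A ⥤ T} (h : IsSingularityCategory ι)
include h

lemma nonempty_iso_shift_syz (N : A) :
    Nonempty (ι.obj (syz N) ≅ (ι.obj N)⟦(-1 : ℤ)⟧) := by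
  have hS : (ShortComplex.mk _ _ (kernel.condition (Projective.π N))).ShortExact :=
    { exact := ShortComplex.exact_of_f_is_kernel _ (kernelIsKernel _) }
  obtain ⟨δ, hδ⟩ := h.ses_triangle _ _ _ hS
  have : IsIso δ := (Triangle.isZero₂_iff_isIso₃ _ hδ).1 (h.proj_isZero _ inferInstance)
  exact ⟨(shiftFunctorCompIsoId T (1 : ℤ) (-1) (by norm_num)).symm.app _ ≪≫
    (shiftFunctor T (-1 : ℤ)).mapIso (asIso δ).symm⟩

lemma nonempty_iso_shift_syzPow (M : A) (k : ℕ) :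
    Nonempty (ι.obj (syzPow k M) ≅ (ι.obj M)⟦(-k : ℤ)⟧) := by
  induction k with
  | zero => exact ⟨(shiftFunctorZero' T (-(0 : ℕ) : ℤ) (by simp)).symm.app _⟩
  | succ k ih =>
    obtain ⟨e₁⟩ := h.nonempty_iso_shift_syz (syzPow k M)
    obtain ⟨e₂⟩ := ih
    exact ⟨e₁ ≪≫ (shiftFunctor T (-1 : ℤ)).mapIso e₂ ≪≫
      (shiftFunctorAdd' T (-k : ℤ) (-1) (-(k + 1 : ℕ)) (by push_cast; ring)).symm.app _⟩

lemma subsingleton_hom_to_of_extClosure {M : A} {W : T} [Subsingleton (W ⟶ ι.obj M)]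
    {N : A} (hN : extClosure M N) : Subsingleton (W ⟶ ι.obj N) := by
  induction hN with
  | self => infer_instance
  | proj P hP => exact ⟨(h.proj_isZero P hP).eq_of_tgt⟩
  | summand X Y s r hsr _ ih =>
    have : IsSplitMono (ι.map s) := ⟨⟨⟨ι.map r, by rw [← ι.map_comp, hsr, ι.map_id]⟩⟩⟩
    exact ⟨fun f g => (cancel_mono (ι.map s)).1 (Subsingleton.elim _ _)⟩
  | ext X Y Z f g w hS _ _ ihX ihZ =>
    obtain ⟨δ, hδ⟩ := h.ses_triangle f g w hS
    refine subsingleton_of_forall_eq 0 fun φ => ?_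
    obtain ⟨ψ, rfl⟩ := Triangle.coyoneda_exact₂ _ hδ φ (ihZ.elim _ _)
    rw [show ψ = 0 from ihX.elim _ _]
    exact zero_comp

lemma subsingleton_hom_from_of_extClosure {M : A} {W : T} [Subsingleton (ι.obj M ⟶ W)]
    {N : A} (hN : extClosure M N) : Subsingleton (ι.obj N ⟶ W) := by
  induction hN with
  | self => infer_instance
  | proj P hP => exact ⟨(h.proj_isZero P hP).eq_of_src⟩
  | summand X Y s r hsr _ ih =>
    have : IsSplitEpi (ι.map r) := ⟨⟨⟨ι.map s, by rw [← ι.map_comp, hsr, ι.map_id]⟩⟩⟩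
    exact ⟨fun f g => (cancel_epi (ι.map r)).1 (Subsingleton.elim _ _)⟩
  | ext X Y Z f g w hS _ _ ihX ihZ =>
    obtain ⟨δ, hδ⟩ := h.ses_triangle f g w hS
    refine subsingleton_of_forall_eq 0 fun φ => ?_
    obtain ⟨ψ, rfl⟩ := Triangle.yoneda_exact₂ _ hδ φ (ihX.elim _ _)
    rw [show ψ = 0 from ihZ.elim _ _]
    exact comp_zero

lemma subsingleton_hom_shift_add_iff {M : A} {d : ℕ} (hM : extClosure M (syzPow d M)) (j : ℤ) :
    Subsingleton (ι.obj M ⟶ (ι.obj M)⟦j + d⟧) ↔ Subsingleton (ι.obj M ⟶ (ι.obj M)⟦j⟧) := by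
  obtain ⟨e⟩ := h.nonempty_iso_shift_syzPow M d
  constructor
  · intro hjd
    have : Subsingleton ((ι.obj M)⟦-(j + d)⟧ ⟶ ι.obj M) := by
      rwa [← subsingleton_hom_shift_zero_iff (G := ℤ),
        subsingleton_shift_hom_iff _ _ (c := j + d) (by ring)]
    have := h.subsingleton_hom_to_of_extClosure (W := (ι.obj M)⟦-(j + d)⟧) hM
    rw [← subsingleton_shift_hom_iff _ _ (a := -(j + d)) (b := -(d : ℤ)) (by ring)]
    exact (Iso.homCongr (Iso.refl _) e).subsingleton_congr.1 this
  · intro hj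
    have := h.subsingleton_hom_from_of_extClosure (W := (ι.obj M)⟦j⟧) hM
    rw [← subsingleton_shift_hom_iff _ _ (a := -(d : ℤ)) (b := j) (by ring)]
    exact (Iso.homCongr e (Iso.refl _)).subsingleton_congr.1 this

end IsSingularityCategory

theorem hom_shift_ne_zero_general (ι : A ⥤ T) (h : IsSingularityCategory ι)
    (M : A) (d : ℕ) (hM : VirtuallyPeriodic d M) :
    ∀ n : ℤ, ∃ f : ι.obj M ⟶ (ι.obj M)⟦n * (d : ℤ)⟧, f ≠ 0 := by
  intro n
  by_contra! hvanish
  have hper : Function.Periodic (fun j : ℤ => Subsingleton (ι.obj M ⟶ (ι.obj M)⟦j⟧)) d :=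
    fun j => propext (h.subsingleton_hom_shift_add_iff hM.2 j)
  have h₀ : Subsingleton (ι.obj M ⟶ (ι.obj M)⟦(0 : ℤ)⟧) :=
    hper.int_mul_eq n ▸ subsingleton_of_forall_eq 0 hvanish
  rw [subsingleton_hom_shift_zero_iff] at h₀
  exact hM.1 ((h.isZero_iff M).1 ((IsZero.iff_id_eq_zero _).2 (Subsingleton.elim _ _)))

/-- Non-vanishing theorem: for a virtually `d`-periodic object `M`, the Hom group
`Hom_{D_sg(A)}(M, Σ^{n d}(M))` is nonzero for every integer `n`. -/
theorem hom_shift_ne_zero (ι : A ⥤ T) (h : IsSingularityCategory ι)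
    (M : A) (d : ℕ) (hd : 1 ≤ d) (hM : VirtuallyPeriodic d M) :
    ∀ n : ℤ, ∃ f : ι.obj M ⟶ (ι.obj M)⟦n * (d : ℤ)⟧, f ≠ 0 :=
  hom_shift_ne_zero_general ι h M d hM

end SingPaper
end
end

section
/- In a triangulated category T, if T has a silting subcategory, then for every object X of T one has Hom_T(X, Σ^d(X)) = 0 for all sufficiently large d. -/
open CategoryTheory Limits Pretriangulated

noncomputable section

namespace SingPaper

variable {T : Type*} [Category T] [Preadditive T] [HasZeroObject T] [HasShift T ℤ]
  [∀ n : ℤ, (shiftFunctor T n).Additive] [Pretriangulated T]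

/-- The class of objects of the smallest thick triangulated subcategory of `T`
containing the class of objects `S`: it is closed under isomorphisms, shifts,
direct summands and cones of morphisms between its objects. -/
inductive thickClosure (S : Set T) : T → Prop
  | of (X : T) : X ∈ S → thickClosure S X
  | zero (X : T) : IsZero X → thickClosure S X
  | iso (X Y : T) : (X ≅ Y) → thickClosure S X → thickClosure S Y
  | shift (X : T) (n : ℤ) : thickClosure S X → thickClosure S (X⟦n⟧)
  | summand (X Y : T) (s : X ⟶ Y) (r : Y ⟶ X) :
      s ≫ r = 𝟙 X → thickClosure S Y → thickClosure S X
  | cone (Tr : Triangle T) : Tr ∈ (distTriang T) →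
      thickClosure S Tr.obj₁ → thickClosure S Tr.obj₂ → thickClosure S Tr.obj₃

/-- A class of objects `S` of `T` (i.e. a full additive subcategory) is presilting if
`Hom(X, Y⟦n⟧) = 0` for all `X, Y ∈ S` and all `n > 0`. -/
def IsPresilting (S : Set T) : Prop :=
  ∀ X ∈ S, ∀ Y ∈ S, ∀ n : ℤ, 0 < n → ∀ f : X ⟶ Y⟦n⟧, f = 0

/-- A class of objects `S` is silting if it is presilting and generates `T` as a
thick triangulated subcategory. -/
def IsSilting (S : Set T) : Prop :=
  IsPresilting S ∧ ∀ X : T, thickClosure S X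

set_option linter.unusedSectionVars false

lemma target_shift {M Z : T} {a n b : ℤ} (h : a + n = b)
    (hv : ∀ g : M ⟶ Z⟦b⟧, g = 0) (f : M ⟶ (Z⟦a⟧)⟦n⟧) : f = 0 := by
  have h0 : f ≫ ((shiftFunctorAdd' T a n b h).inv.app Z) = 0 := hv _
  have : f = (f ≫ ((shiftFunctorAdd' T a n b h).inv.app Z)) ≫
      ((shiftFunctorAdd' T a n b h).hom.app Z) := by simp
  rw [this, h0, Limits.zero_comp]

lemma source_shift {X Y : T} {a n b : ℤ} (h : a + n = b)
    (hv : ∀ g : X ⟶ Y⟦a⟧, g = 0) (f : X⟦n⟧ ⟶ Y⟦b⟧) : f = 0 := by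
  set e := (shiftFunctorAdd' T a n b h).app Y
  have hg : (shiftFunctor T n).preimage (f ≫ e.hom) = 0 := hv _
  have himg : (shiftFunctor T n).map ((shiftFunctor T n).preimage (f ≫ e.hom)) = f ≫ e.hom :=
    Functor.map_preimage _ _
  rw [hg, Functor.map_zero] at himg
  calc f = (f ≫ e.hom) ≫ e.inv := by simp
  _ = 0 := by rw [← himg]; simp

lemma lemA (S : Set T) (hp : IsPresilting S) (Y : T) (hY : thickClosure S Y) :
    ∃ N : ℤ, ∀ d : ℤ, N ≤ d → ∀ M ∈ S, ∀ f : M ⟶ Y⟦d⟧, f = 0 := by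
  induction hY with
  | of X hX => exact ⟨1, fun d hd M hM f => hp M hM X hX d (by omega) f⟩
  | zero X hX =>
      refine ⟨0, fun d hd M hM f => ?_⟩
      have hz : IsZero (X⟦d⟧) := by
        rw [IsZero.iff_id_eq_zero] at hX ⊢
        rw [← (shiftFunctor T d).map_id, hX, Functor.map_zero]
      exact hz.eq_of_tgt f 0
  | iso X Y e hX ih =>
      obtain ⟨N, hN⟩ := ih
      refine ⟨N, fun d hd M hM f => ?_⟩
      have h0 : f ≫ (shiftFunctor T d).map e.inv = 0 := hN d hd M hM _
      calc f = (f ≫ (shiftFunctor T d).map e.inv) ≫ (shiftFunctor T d).map e.hom := by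
            rw [Category.assoc, ← (shiftFunctor T d).map_comp, e.inv_hom_id, (shiftFunctor T d).map_id, Category.comp_id]
        _ = 0 := by rw [h0, Limits.zero_comp]
  | shift X n hX ih =>
      obtain ⟨N, hN⟩ := ih
      refine ⟨N - n, fun d hd M hM f => ?_⟩
      exact target_shift (a := n) (n := d) (b := n + d) rfl
        (fun g => hN (n + d) (by omega) M hM g) f
  | summand X Y s r hsr hY ih =>
      obtain ⟨N, hN⟩ := ih
      refine ⟨N, fun d hd M hM f => ?_⟩
      have h0 : f ≫ (shiftFunctor T d).map s = 0 := hN d hd M hM _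
      calc f = (f ≫ (shiftFunctor T d).map s) ≫ (shiftFunctor T d).map r := by
            rw [Category.assoc, ← (shiftFunctor T d).map_comp, hsr, (shiftFunctor T d).map_id, Category.comp_id]
        _ = 0 := by rw [h0, Limits.zero_comp]
  | cone Tr hTr h1 h2 ih1 ih2 =>
      obtain ⟨N1, hN1⟩ := ih1
      obtain ⟨N2, hN2⟩ := ih2
      refine ⟨max (N1 - 1) N2, fun d hd M hM f => ?_⟩
      have hTr' := Triangle.shift_distinguished Tr hTr d
      set Tr' := (CategoryTheory.shiftFunctor (Triangle T) d).obj Tr with hTr'def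
      have hf3 : f ≫ Tr'.mor₃ = 0 := by
        apply target_shift (a := d) (n := 1) (b := d + 1) rfl
          (fun g => hN1 (d + 1) (by omega) M hM g)
      obtain ⟨g, hg⟩ := Triangle.coyoneda_exact₃ Tr' hTr' f hf3
      have hg0 : g = 0 := hN2 d (by omega) M hM g
      rw [hg, hg0, Limits.zero_comp]; rfl

lemma lemB (S : Set T) (Y : T)
    (hY : ∃ N : ℤ, ∀ d : ℤ, N ≤ d → ∀ M ∈ S, ∀ f : M ⟶ Y⟦d⟧, f = 0)
    (X : T) (hX : thickClosure S X) :
    ∃ N : ℤ, ∀ d : ℤ, N ≤ d → ∀ f : X ⟶ Y⟦d⟧, f = 0 := by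
  induction hX with
  | of Z hZ => obtain ⟨N, hN⟩ := hY; exact ⟨N, fun d hd f => hN d hd Z hZ f⟩
  | zero Z hZ => exact ⟨0, fun d hd f => hZ.eq_of_src f 0⟩
  | iso A B e hA ih =>
      obtain ⟨N, hN⟩ := ih
      refine ⟨N, fun d hd f => ?_⟩
      have h0 : e.hom ≫ f = 0 := hN d hd _
      calc f = e.inv ≫ e.hom ≫ f := by simp
        _ = 0 := by rw [h0, Limits.comp_zero]
  | shift A n hA ih =>
      obtain ⟨N, hN⟩ := ih
      refine ⟨N + n, fun d hd f => ?_⟩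
      exact source_shift (a := d - n) (n := n) (b := d) (by ring)
        (fun g => hN (d - n) (by omega) g) f
  | summand A B s r hsr hB ih =>
      obtain ⟨N, hN⟩ := ih
      refine ⟨N, fun d hd f => ?_⟩
      have h0 : r ≫ f = 0 := hN d hd _
      calc f = s ≫ r ≫ f := by rw [← Category.assoc, hsr, Category.id_comp]
        _ = 0 := by rw [h0, Limits.comp_zero]
  | cone Tr hTr h1 h2 ih1 ih2 =>
      obtain ⟨N1, hN1⟩ := ih1
      obtain ⟨N2, hN2⟩ := ih2
      refine ⟨max (N1 + 1) N2, fun d hd f => ?_⟩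
      have hf2 : Tr.mor₂ ≫ f = 0 := hN2 d (by omega) _
      obtain ⟨g, hg⟩ := Triangle.yoneda_exact₃ Tr hTr f hf2
      have hg0 : g = 0 := source_shift (a := d - 1) (n := 1) (b := d) (by ring)
        (fun h => hN1 (d - 1) (by omega) h) g
      rw [hg, hg0, Limits.comp_zero]

/-- If a triangulated category has a silting subcategory, then for every object `X`
one has `Hom(X, Σ^d X) = 0` for all sufficiently large `d`. -/
theorem hom_shift_eventually_zero_of_silting (S : Set T) (hS : IsSilting S) :
    ∀ X : T, ∃ N : ℤ, ∀ d : ℤ, N ≤ d → ∀ f : X ⟶ X⟦d⟧, f = 0 := fun X =>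
  lemB S X (lemA S hS.1 X (hS.2 X)) X (hS.2 X)

end SingPaper
end
end

section
/- If M is an ultimately-closed object of an abelian category A with enough projectives and M has infinite projective dimension, then the object E = M ⊕ Ω(M) ⊕ ⋯ ⊕ Ω^{d-1}(M) is virtually 1-periodic, where d is the integer witnessing ultimate closedness. -/
open CategoryTheory Limits Pretriangulated

noncomputable section

namespace SingPaper

variable {A : Type*} [Category A] [Abelian A] [EnoughProjectives A]

attribute [local instance] Abelian.hasFiniteBiproducts

/-- `Y` belongs to `add X`: it is a direct summand of a finite direct sum of copies
of `X`. -/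
def inAdd (X Y : A) : Prop :=
  ∃ (n : ℕ) (s : Y ⟶ ⨁ (fun _ : Fin n => X)) (r : (⨁ fun _ : Fin n => X) ⟶ Y),
    s ≫ r = 𝟙 Y

/-- `X` and `Y` are isomorphic in the stable category `A` modulo projectives:
they become isomorphic after adding projective direct summands. -/
def StablyIso (X Y : A) : Prop :=
  ∃ P Q : A, Projective P ∧ Projective Q ∧ Nonempty (X ⊞ P ≅ Y ⊞ Q)

/-- `syzSum M e = M ⊕ Ω(M) ⊕ ⋯ ⊕ Ω^e(M)`. -/
def syzSum (M : A) : ℕ → A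
  | 0 => M
  | n + 1 => syzSum M n ⊞ syzPow (n + 1) M

/-- `M` is ultimately-closed: there is `d ≥ 1` such that `Ω^d(M)` is stably
isomorphic to an object of `add (M ⊕ Ω(M) ⊕ ⋯ ⊕ Ω^{d-1}(M))`. -/
def UltimatelyClosed (M : A) : Prop :=
  ∃ d : ℕ, 1 ≤ d ∧ ∃ X : A, inAdd (syzSum M (d - 1)) X ∧ StablyIso (syzPow d M) X

end SingPaper

/-
Schanuel's lemma makes `Ω` well defined on stable isomorphism classes, and compatible with
`⊕` up to projective summands. Hence `Ω(E)` is stably isomorphic to `Ω(M) ⊕ ⋯ ⊕ Ω^d(M)`: the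
first `d - 1` summands are summands of `E`, and `Ω^d(M)` is stably isomorphic to an object of
`add E`. Since `⟨E⟩` contains the projectives and is closed under sums and summands, it is
closed under stable isomorphism, so `Ω(E) ∈ ⟨E⟩`. Conversely `M` is a summand of `E`, so each
`Ω^n(M)` is a summand of `Ω^n(E)` up to projectives; thus `E` has infinite projective dimension.
-/

namespace SingPaper

open ObjectProperty ZeroObject

variable {A : Type*} [Category A] [Abelian A]

namespace StablyIso

theorem of_iso {X Y : A} (e : X ≅ Y) : StablyIso X Y :=
  ⟨0, 0, inferInstance, inferInstance, ⟨biprod.mapIso e (Iso.refl _)⟩⟩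

theorem refl (X : A) : StablyIso X X := of_iso (Iso.refl X)

theorem symm {X Y : A} : StablyIso X Y → StablyIso Y X
  | ⟨P, Q, hP, hQ, ⟨e⟩⟩ => ⟨Q, P, hQ, hP, ⟨e.symm⟩⟩

theorem trans {X Y Z : A} : StablyIso X Y → StablyIso Y Z → StablyIso X Z
  | ⟨P, Q, _, _, ⟨e⟩⟩, ⟨P', Q', _, _, ⟨e'⟩⟩ =>
    ⟨P ⊞ P', Q' ⊞ Q, inferInstance, inferInstance, ⟨calc
      X ⊞ (P ⊞ P') ≅ (X ⊞ P) ⊞ P' := (biprod.associator _ _ _).symm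
      _ ≅ (Y ⊞ Q) ⊞ P' := biprod.mapIso e (Iso.refl _)
      _ ≅ Y ⊞ (Q ⊞ P') := biprod.associator _ _ _
      _ ≅ Y ⊞ (P' ⊞ Q) := biprod.mapIso (Iso.refl _) (biprod.braiding _ _)
      _ ≅ (Y ⊞ P') ⊞ Q := (biprod.associator _ _ _).symm
      _ ≅ (Z ⊞ Q') ⊞ Q := biprod.mapIso e' (Iso.refl _)
      _ ≅ Z ⊞ (Q' ⊞ Q) := biprod.associator _ _ _⟩⟩

theorem biprod_of_projective (X : A) {P : A} [Projective P] : StablyIso (X ⊞ P) X :=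
  ⟨P, P ⊞ P, inferInstance, inferInstance, ⟨biprod.associator _ _ _⟩⟩

theorem projective {X Y : A} [Projective Y] : StablyIso X Y → Projective X
  | ⟨P, _, _, _, ⟨e⟩⟩ =>
    have : Projective (X ⊞ P) := .of_iso e.symm inferInstance
    (BinaryBiproduct.bicone X P).retract_left.projective

end StablyIso

def pullbackIsoKernelBiprod {P Q N : A} [Projective P] (f : P ⟶ N) (g : Q ⟶ N) [Epi g] :
    pullback f g ≅ kernel g ⊞ P :=
  have hS : (ShortComplex.mk _ _ (kernel.condition (pullback.fst f g))).ShortExact :=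
    .mk' (ShortComplex.exact_of_f_is_kernel _ (kernelIsKernel _)) inferInstance inferInstance
  have := isIso_kernel_map_of_isPullback (IsPullback.of_hasPullback f g)
  hS.splittingOfProjective.isoBinaryBiproduct ≪≫
    biprod.mapIso (asIso (kernel.map _ _ _ _ (IsPullback.of_hasPullback f g).w)) (Iso.refl P)

/-- Schanuel's lemma. -/
theorem stablyIso_kernel_of_epi {P Q N : A} [Projective P] [Projective Q] (f : P ⟶ N)
    (g : Q ⟶ N) [Epi f] [Epi g] : StablyIso (kernel f) (kernel g) :=
  ⟨Q, P, inferInstance, inferInstance,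
    ⟨(pullbackIsoKernelBiprod g f).symm ≪≫ pullbackSymmetry g f ≪≫ pullbackIsoKernelBiprod f g⟩⟩

def kernelBiprodMapIso {X Y X' Y' : A} (u : X ⟶ Y) (v : X' ⟶ Y') :
    kernel (biprod.map u v) ≅ kernel u ⊞ kernel v where
  hom := biprod.lift (kernel.map _ _ biprod.fst biprod.fst (by simp))
    (kernel.map _ _ biprod.snd biprod.snd (by simp))
  inv := kernel.lift _ (biprod.map (kernel.ι u) (kernel.ι v)) (by ext <;> simp)
  hom_inv_id := by ext <;> simp
  inv_hom_id := by ext <;> simp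

attribute [local instance] Abelian.hasFiniteBiproducts

instance (B : A) : IsStableUnderRetracts (extClosure B) where
  of_retract h hY := .summand _ _ h.i h.r h.retract hY

instance (B : A) : IsClosedUnderExtensions (extClosure B) where
  prop_X₂_of_shortExact hS h₁ h₃ := .ext _ _ _ _ _ _ hS h₁ h₃

theorem extClosure_of_stablyIso {B X Y : A} (h : StablyIso X Y) (hY : extClosure B Y) :
    extClosure B X := by
  obtain ⟨P, Q, -, hQ, ⟨e⟩⟩ := h
  have : extClosure B (Y ⊞ Q) := prop_biprod (extClosure B) hY (.proj Q hQ)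
  exact IsStableUnderRetracts.of_biprod_left (extClosure B)
    (prop_of_iso (extClosure B) e.symm this)

def biproductFinSuccIso (X : A) (n : ℕ) :
    (⨁ fun _ : Fin (n + 1) => X) ≅ X ⊞ ⨁ fun _ : Fin n => X :=
  (biproduct.isLimit _).conePointUniqueUpToIso
    (extendFanIsLimit _ (biproduct.isLimit _) (BinaryBiproduct.isLimit _ _))

theorem extClosure_biproduct_fin {B X : A} (h : extClosure B X) :
    ∀ n : ℕ, extClosure B (⨁ fun _ : Fin n => X)
  | 0 => .proj _ (IsZero.projective
      ((IsZero.iff_id_eq_zero _).2 (biproduct.hom_ext _ _ fun j => j.elim0)))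
  | n + 1 => prop_of_iso (extClosure B) (biproductFinSuccIso X n).symm
      (prop_biprod (extClosure B) h (extClosure_biproduct_fin h n))

theorem extClosure_of_inAdd {B X : A} : inAdd B X → extClosure B X
  | ⟨n, s, r, hsr⟩ => .summand _ _ s r hsr (extClosure_biproduct_fin .self n)

variable [EnoughProjectives A]

theorem stablyIso_syz_kernel {P N : A} [Projective P] (g : P ⟶ N) [Epi g] :
    StablyIso (syz N) (kernel g) :=
  stablyIso_kernel_of_epi (Projective.π N) g

instance projective_syz (P : A) [Projective P] : Projective (syz P) :=
  have : Projective (kernel (𝟙 P)) := (isZero_kernel_of_mono _).projective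
  (stablyIso_syz_kernel (𝟙 P)).projective

theorem stablyIso_syz_biprod (N N' : A) : StablyIso (syz (N ⊞ N')) (syz N ⊞ syz N') :=
  (stablyIso_syz_kernel (biprod.map (Projective.π N) (Projective.π N'))).trans
    (.of_iso (kernelBiprodMapIso _ _))

theorem stablyIso_syz_of_iso {X Y : A} (e : X ≅ Y) : StablyIso (syz X) (syz Y) :=
  (stablyIso_syz_kernel (Projective.π Y ≫ e.inv)).trans (.of_iso (kernelCompMono _ _))

theorem stablyIso_syz {X Y : A} : StablyIso X Y → StablyIso (syz X) (syz Y)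
  | ⟨P, Q, _, _, ⟨e⟩⟩ =>
    (StablyIso.biprod_of_projective _).symm.trans <| (stablyIso_syz_biprod X P).symm.trans <|
      (stablyIso_syz_of_iso e).trans <| (stablyIso_syz_biprod Y Q).trans <|
      StablyIso.biprod_of_projective _

theorem stablyIso_syzPow {X Y : A} (h : StablyIso X Y) : ∀ n, StablyIso (syzPow n X) (syzPow n Y)
  | 0 => h
  | n + 1 => stablyIso_syz (stablyIso_syzPow h n)

theorem stablyIso_syzPow_biprod (X Y : A) :
    ∀ n, StablyIso (syzPow n (X ⊞ Y)) (syzPow n X ⊞ syzPow n Y)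
  | 0 => .refl _
  | n + 1 => (stablyIso_syz (stablyIso_syzPow_biprod X Y n)).trans (stablyIso_syz_biprod _ _)

def isoKernelBiprodOfRetract {N E : A} (h : Retract N E) : E ≅ kernel h.r ⊞ N :=
  (ShortComplex.Splitting.ofExactOfSection (.mk _ _ (kernel.condition h.r))
    (ShortComplex.exact_of_f_is_kernel _ (kernelIsKernel _)) h.i h.retract
    inferInstance).isoBinaryBiproduct

theorem HasFiniteProjDim.of_retract {N E : A} (h : Retract N E) :
    HasFiniteProjDim E → HasFiniteProjDim N
  | ⟨n, _⟩ =>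
    have : Projective (syzPow n (kernel h.r) ⊞ syzPow n N) :=
      ((stablyIso_syzPow_biprod _ _ n).symm.trans
        (stablyIso_syzPow (.of_iso (isoKernelBiprodOfRetract h)) n).symm).projective
    ⟨n, (BinaryBiproduct.bicone (syzPow n (kernel h.r)) _).retract_right.projective⟩

theorem nonempty_retract_syzPow_syzSum (M : A) {j e : ℕ} (h : j ≤ e) :
    Nonempty (Retract (syzPow j M) (syzSum M e)) := by
  induction e with
  | zero => obtain rfl := Nat.le_zero.mp h; exact ⟨.refl _⟩
  | succ e ih =>
    obtain h | rfl := h.lt_or_eq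
    · exact ⟨(ih (Nat.lt_succ_iff.mp h)).some.trans (BinaryBiproduct.bicone _ _).retract_left⟩
    · exact ⟨(BinaryBiproduct.bicone _ _).retract_right⟩

theorem extClosure_syz_syzSum {B M : A} {e : ℕ}
    (h : ∀ j, 1 ≤ j → j ≤ e + 1 → extClosure B (syzPow j M)) :
    extClosure B (syz (syzSum M e)) := by
  induction e with
  | zero => exact h 1 le_rfl le_rfl
  | succ e ih =>
    exact extClosure_of_stablyIso (stablyIso_syz_biprod _ _) <| prop_biprod (extClosure B)
      (ih fun j h₁ h₂ => h j h₁ (by omega)) (h (e + 2) (by omega) le_rfl)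

/-- If `M` is ultimately-closed with witness `d ≥ 1` and `M` has infinite projective
dimension, then `E = M ⊕ Ω(M) ⊕ ⋯ ⊕ Ω^{d-1}(M)` is virtually `1`-periodic. -/
theorem virtuallyPeriodic_of_ultimatelyClosed (M : A) (hpd : ¬ HasFiniteProjDim M)
    (d : ℕ) (hd : 1 ≤ d) (X : A) (hX : inAdd (syzSum M (d - 1)) X)
    (hst : StablyIso (syzPow d M) X) :
    VirtuallyPeriodic 1 (syzSum M (d - 1)) := by
  obtain ⟨e, rfl⟩ : ∃ e, d = e + 1 := ⟨d - 1, by omega⟩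
  rw [Nat.add_sub_cancel] at hX ⊢
  refine ⟨fun hE => hpd (hE.of_retract (nonempty_retract_syzPow_syzSum M e.zero_le).some),
    extClosure_syz_syzSum fun j _ hj => ?_⟩
  obtain hj | rfl := hj.lt_or_eq
  · exact prop_of_retract _ (nonempty_retract_syzPow_syzSum M (Nat.lt_succ_iff.mp hj)).some .self
  · exact extClosure_of_stablyIso hst (extClosure_of_inAdd hX)

end SingPaper
end
end

section
/- Let A be a k-linear abelian category with enough projectives, M a virtually d-periodic object, and X an object of D_sg(A) such that the k-module Hom_{D_sg(A)}(X, M) has infinite length. Then the k-module Hom_{D_sg(A)}(X, Σ^{nd}(M)) has infinite length for every n ≥ 0. -/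
open CategoryTheory Limits Pretriangulated

noncomputable section

namespace SingPaper

variable {A : Type*} [Category A] [Abelian A] [EnoughProjectives A]

variable {T : Type*} [Category T] [Preadditive T] [HasZeroObject T] [HasShift T ℤ]
  [∀ n : ℤ, (shiftFunctor T n).Additive] [Pretriangulated T]

variable (k : Type*) [CommRing k] [Linear k A] [Linear k T]

/-!
For a fixed shift `m`, the objects `N` of `A` for which `Hom(X, ι N⟦m⟧)` has finite length
contain the projectives (which vanish in `D_sg(A)`) and are closed under summands and
extensions (exactness of `Hom(X, -)` on the induced distinguished triangles), so they contain
all of `⟨M⟩` as soon as they contain `M`. Because the syzygy sequences give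
`ι (Ω^d M)⟦d⟧ ≅ ι M` and `Ω^d M ∈ ⟨M⟩`, finite length at shift `m + d` forces finite length
at shift `m`; descending from `n d` to `0` contradicts the hypothesis on `Hom(X, ι M)`.
-/

theorem _root_.IsFiniteLength.of_exact {R M₁ M₂ M₃ : Type*} [Ring R]
    [AddCommGroup M₁] [Module R M₁] [AddCommGroup M₂] [Module R M₂]
    [AddCommGroup M₃] [Module R M₃] {f : M₁ →ₗ[R] M₂} {g : M₂ →ₗ[R] M₃}
    (hfg : Function.Exact f g) (h₁ : IsFiniteLength R M₁) (h₃ : IsFiniteLength R M₃) :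
    IsFiniteLength R M₂ := by
  rw [isFiniteLength_iff_isNoetherian_isArtinian] at h₁ h₃ ⊢
  obtain ⟨_, _⟩ := h₁
  obtain ⟨_, _⟩ := h₃
  have hrk : LinearMap.range f = LinearMap.ker g := (LinearMap.exact_iff.mp hfg).symm
  exact ⟨isNoetherian_of_range_eq_ker f g hrk, isArtinian_of_range_eq_ker f g hrk⟩

theorem isFiniteLength_hom_of_mono {C : Type*} [Category C] [Preadditive C] [Linear k C]
    {X Y Z : C} (s : Y ⟶ Z) [Mono s] (h : IsFiniteLength k (X ⟶ Z)) :
    IsFiniteLength k (X ⟶ Y) :=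
  h.of_injective (f := Linear.rightComp k X s) fun _ _ hab => (cancel_mono s).mp hab

section Triangulated

variable {C : Type*} [Category C] [Preadditive C] [HasZeroObject C] [HasShift C ℤ]
  [∀ n : ℤ, (shiftFunctor C n).Additive] [Pretriangulated C] [Linear k C]

theorem exact_rightComp_of_distinguished (Tr : Triangle C) (hTr : Tr ∈ distTriang C) (X : C) :
    Function.Exact (Linear.rightComp k X Tr.mor₁) (Linear.rightComp k X Tr.mor₂) := by
  intro b
  constructor
  · intro hb
    obtain ⟨a, ha⟩ := Triangle.coyoneda_exact₂ Tr hTr b hb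
    exact ⟨a, ha.symm⟩
  · rintro ⟨a, rfl⟩
    change (a ≫ Tr.mor₁) ≫ Tr.mor₂ = 0
    rw [Category.assoc, comp_distTriang_mor_zero₁₂ Tr hTr, comp_zero]

theorem isFiniteLength_hom_obj₂_of_distinguished (Tr : Triangle C) (hTr : Tr ∈ distTriang C)
    (X : C) (h₁ : IsFiniteLength k (X ⟶ Tr.obj₁)) (h₃ : IsFiniteLength k (X ⟶ Tr.obj₃)) :
    IsFiniteLength k (X ⟶ Tr.obj₂) :=
  IsFiniteLength.of_exact (exact_rightComp_of_distinguished k Tr hTr X) h₁ h₃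

end Triangulated

theorem syz_shortExact (N : A) :
    (ShortComplex.mk (kernel.ι (Projective.π N)) (Projective.π N)
      (kernel.condition _)).ShortExact where
  exact := ShortComplex.exact_of_f_is_kernel _ (kernelIsKernel (Projective.π N))

namespace IsSingularityCategory

variable {ι : A ⥤ T} (h : IsSingularityCategory ι)
include h

/-- The triangle `Ω N → P → N → (Ω N)⟦1⟧` has a zero middle term, so its connecting morphism
is an isomorphism. -/
def shiftSyzIso (N : A) : (ι.obj (syz N))⟦(1 : ℤ)⟧ ≅ ι.obj N :=
  have hT := (h.ses_triangle _ _ _ (syz_shortExact N)).choose_spec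
  (@asIso _ _ _ _ _ ((Triangle.isZero₂_iff_isIso₃ _ hT).mp
    (h.proj_isZero _ inferInstance))).symm

def shiftSyzPowIso (M : A) : ∀ j : ℕ, (ι.obj (syzPow j M))⟦(j : ℤ)⟧ ≅ ι.obj M
  | 0 => (shiftFunctorZero T ℤ).app (ι.obj M)
  | j + 1 =>
    (shiftFunctorAdd' T 1 (j : ℤ) ((j + 1 : ℕ) : ℤ) (by push_cast; ring)).app
        (ι.obj (syzPow (j + 1) M)) ≪≫
      (shiftFunctor T (j : ℤ)).mapIso (h.shiftSyzIso (syzPow j M)) ≪≫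
      shiftSyzPowIso M j

omit [Linear k A] in
theorem isFiniteLength_hom_shift_of_extClosure {M N : A} (hN : extClosure M N) (X : T) (m : ℤ)
    (hM : IsFiniteLength k (X ⟶ (ι.obj M)⟦m⟧)) : IsFiniteLength k (X ⟶ (ι.obj N)⟦m⟧) := by
  induction hN with
  | self => exact hM
  | proj P hP =>
    have hZ := (shiftFunctor T m).map_isZero (h.proj_isZero P hP)
    have : Subsingleton (X ⟶ (ι.obj P)⟦m⟧) := ⟨hZ.eq_of_tgt⟩
    exact .of_subsingleton
  | summand Y Z s r hsr _ ih =>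
    have : IsSplitMono (ι.map s) := .mk' ⟨ι.map r, by rw [← ι.map_comp, hsr, ι.map_id]⟩
    exact isFiniteLength_hom_of_mono k ((ι.map s)⟦m⟧') ih
  | ext Y Z W f g w hfg _ _ ihY ihW =>
    obtain ⟨δ, hT⟩ := h.ses_triangle f g w hfg
    exact isFiniteLength_hom_obj₂_of_distinguished k _ (Triangle.shift_distinguished _ hT m) X
      ihY ihW

omit [Linear k A] in
theorem isFiniteLength_hom_shift_of_shift_add {M : A} {d : ℕ} (hd : extClosure M (syzPow d M))
    (X : T) (m : ℤ) (hfin : IsFiniteLength k (X ⟶ (ι.obj M)⟦m + d⟧)) :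
    IsFiniteLength k (X ⟶ (ι.obj M)⟦m⟧) := by
  have hsyz := h.isFiniteLength_hom_shift_of_extClosure k hd X (m + d) hfin
  let e : (ι.obj (syzPow d M))⟦m + d⟧ ≅ (ι.obj M)⟦m⟧ :=
    (shiftFunctorAdd' T (d : ℤ) m (m + d) (add_comm _ _)).app (ι.obj (syzPow d M)) ≪≫
      (shiftFunctor T m).mapIso (h.shiftSyzPowIso M d)
  exact (Linear.homCongr k (Iso.refl X) e).isFiniteLength hsyz

end IsSingularityCategory

theorem hom_infinite_length_shift (ι : A ⥤ T)
    (h : IsSingularityCategory ι) (M : A) (d : ℕ)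
    (hM : VirtuallyPeriodic d M) (X : T)
    (hX : ¬ IsFiniteLength k (X ⟶ ι.obj M)) :
    ∀ n : ℕ, ¬ IsFiniteLength k (X ⟶ (ι.obj M)⟦(n * d : ℤ)⟧) := by
  intro n
  induction n with
  | zero =>
    intro hfin
    rw [Nat.cast_zero, zero_mul] at hfin
    exact hX ((Linear.homCongr k (Iso.refl X) ((shiftFunctorZero T ℤ).app _)).isFiniteLength hfin)
  | succ n ih =>
    intro hfin
    rw [Nat.cast_succ, add_one_mul] at hfin
    exact ih (h.isFiniteLength_hom_shift_of_shift_add k hM.2 X _ hfin)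

end SingPaper
end
end
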